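/- arXiv:2402.13407 — 3 statements merged into one kernel-verified Lean document; each statement's English description precedes it below -/
import Mathlib

section
/- Let 0 < a < 1, κ > 0 with a + κ < 1 and (2κ+1)^2 > 8a(1-a+κ). Then the two roots x_± = (2κ+1 ± √((2κ+1)^2 - 8a(1-a+κ)))/(4a) satisfy 2κ/(2κ+1) < x_- and x_- < 2(1-a+κ)/(2κ+1) < x_+. -/
/-! The quadratic `f x = 2 a x² - (2κ + 1) x + (1 - a + κ)` has `x₋ < t < x₊` exactly where
`f t < 0`. At `t = 2 (1 - a + κ) / (2κ + 1)` one finds `f t = (1 - a + κ) (8 a (1 - a + κ) - (2κ + 1)²) / (2κ + 1)²`,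
negative by the existence condition. At the smaller point `t = 2κ / (2κ + 1)` one finds
`f t = 8 a κ² / (2κ + 1)² + (1 - a - κ) > 0`, so this point lies outside `[x₋, x₊]`, hence below `x₋`. -/

section Quadratic

variable {A B C s : ℝ}

theorem quadratic_eq_mul_sub_roots (hA : A ≠ 0) (hs : s ^ 2 = B ^ 2 - 4 * A * C) (x : ℝ) :
    A * x ^ 2 - B * x + C = A * (x - (B + s) / (2 * A)) * (x - (B - s) / (2 * A)) := by
  field_simp
  linear_combination hs

theorem mem_roots_of_quadratic_neg (hA : 0 < A) (hs0 : 0 ≤ s) (hs : s ^ 2 = B ^ 2 - 4 * A * C)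
    {t : ℝ} (ht : A * t ^ 2 - B * t + C < 0) :
    (B - s) / (2 * A) < t ∧ t < (B + s) / (2 * A) := by
  rw [quadratic_eq_mul_sub_roots hA.ne' hs] at ht
  have hroots : (B - s) / (2 * A) ≤ (B + s) / (2 * A) := by gcongr; linarith
  have hprod : (t - (B + s) / (2 * A)) * (t - (B - s) / (2 * A)) < 0 := by
    rw [mul_assoc] at ht
    exact neg_of_mul_neg_right ht hA.le
  constructor <;> nlinarith

theorem lt_root_of_quadratic_pos (hA : 0 < A) (hs0 : 0 ≤ s) (hs : s ^ 2 = B ^ 2 - 4 * A * C)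
    {t u : ℝ} (ht : 0 < A * t ^ 2 - B * t + C) (htu : t < u) (hu : A * u ^ 2 - B * u + C < 0) :
    t < (B - s) / (2 * A) := by
  have htp : t < (B + s) / (2 * A) := htu.trans (mem_roots_of_quadratic_neg hA hs0 hs hu).2
  rw [quadratic_eq_mul_sub_roots hA.ne' hs, mul_assoc] at ht
  have hprod := pos_of_mul_pos_right ht hA.le
  linarith [neg_of_mul_pos_right hprod (by linarith)]

end Quadratic

theorem stmt_1_general (a κ : ℝ) (ha : 0 < a) (hκ : 0 < κ)
    (hak : a + κ < 1)
    (hcond : (2 * κ + 1) ^ 2 > 8 * a * (1 - a + κ)) :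
    ∀ xp xm : ℝ,
      xp = (2 * κ + 1 + Real.sqrt ((2 * κ + 1) ^ 2 - 8 * a * (1 - a + κ))) / (4 * a) →
      xm = (2 * κ + 1 - Real.sqrt ((2 * κ + 1) ^ 2 - 8 * a * (1 - a + κ))) / (4 * a) →
      (2 * κ / (2 * κ + 1) < xm ∧
       xm < 2 * (1 - a + κ) / (2 * κ + 1) ∧
       2 * (1 - a + κ) / (2 * κ + 1) < xp) := by
  rintro xp xm rfl rfl
  set s := Real.sqrt ((2 * κ + 1) ^ 2 - 8 * a * (1 - a + κ))
  have hA : 0 < 2 * a := by positivity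
  have hb : 0 < 2 * κ + 1 := by positivity
  have hs0 : 0 ≤ s := Real.sqrt_nonneg _
  have hs : s ^ 2 = (2 * κ + 1) ^ 2 - 4 * (2 * a) * (1 - a + κ) := by
    rw [Real.sq_sqrt (by linarith)]; ring
  have h4a : 4 * a = 2 * (2 * a) := by ring
  have hneg : 2 * a * (2 * (1 - a + κ) / (2 * κ + 1)) ^ 2
      - (2 * κ + 1) * (2 * (1 - a + κ) / (2 * κ + 1)) + (1 - a + κ) < 0 := by
    have hc : 0 < 1 - a + κ := by linarith
    have hval : 2 * a * (2 * (1 - a + κ) / (2 * κ + 1)) ^ 2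
        - (2 * κ + 1) * (2 * (1 - a + κ) / (2 * κ + 1)) + (1 - a + κ)
        = (1 - a + κ) * (8 * a * (1 - a + κ) - (2 * κ + 1) ^ 2) / (2 * κ + 1) ^ 2 := by
      field_simp; ring
    rw [hval]
    exact div_neg_of_neg_of_pos (mul_neg_of_pos_of_neg hc (by linarith)) (by positivity)
  have hpos : 0 < 2 * a * (2 * κ / (2 * κ + 1)) ^ 2
      - (2 * κ + 1) * (2 * κ / (2 * κ + 1)) + (1 - a + κ) := by
    rw [mul_div_cancel₀ _ hb.ne']
    have : 0 < 2 * a * (2 * κ / (2 * κ + 1)) ^ 2 := by positivity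
    linarith
  have hlt : 2 * κ / (2 * κ + 1) < 2 * (1 - a + κ) / (2 * κ + 1) := by gcongr; linarith
  rw [h4a]
  obtain ⟨hm, hp⟩ := mem_roots_of_quadratic_neg hA hs0 hs hneg
  exact ⟨lt_root_of_quadratic_pos hA hs0 hs hpos hlt hneg, hm, hp⟩

theorem stmt_1 (a κ : ℝ) (ha : 0 < a) (ha1 : a < 1) (hκ : 0 < κ)
    (hak : a + κ < 1)
    (hcond : (2 * κ + 1) ^ 2 > 8 * a * (1 - a + κ)) :
    ∀ xp xm : ℝ,
      xp = (2 * κ + 1 + Real.sqrt ((2 * κ + 1) ^ 2 - 8 * a * (1 - a + κ))) / (4 * a) →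
      xm = (2 * κ + 1 - Real.sqrt ((2 * κ + 1) ^ 2 - 8 * a * (1 - a + κ))) / (4 * a) →
      (2 * κ / (2 * κ + 1) < xm ∧
       xm < 2 * (1 - a + κ) / (2 * κ + 1) ∧
       2 * (1 - a + κ) / (2 * κ + 1) < xp) :=
  stmt_1_general a κ ha hκ hak hcond
end

section
/- Let d, n > 0 and 0 < κ ≤ 1/2 with S := d(1 - κ n/d) defined so that d - S = κ n (i.e., tr Cas = κ n < n/2). Define f(z) = ((d+n)z^4 + 2(2d+n-S)z^2 + (d+n))/(4z(z^2+1)) · (2z/(z^2+1))^(d/(2n+d)) for z > 0. Then f'(1) = 0 and f''(1) = -(d+n)(d-2n-S)/(4n+2d) > 0, and z = 1 is the unique critical point of f on (0,∞); moreover f(z) → ∞ as z → 0⁺ and as z → ∞. In particular z = 1 is a global minimum of f. -/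
/-!
With `a = d + n`, `c = 2d + n - S` and `α = d / (2n + d)` the function is `f = scalCurv a c α`.
It satisfies `f (1/z) = f z`, since the numerator `a z⁴ + 2c z² + a` is palindromic and
`2z / (z² + 1)` is invariant under `z ↦ 1/z`. Differentiating,
`f'(z) = (z² - 1) Q(z) · (positive)` with `Q(z) = a(1 - α)(z² - 1)² + 2m z²` and
`m = (3 - α)a - (1 + α)c = 4 f''(1)`; here `m > 0` amounts to `κ < 2`. So `f` decreases on
`(0, 1]` and increases on `[1, ∞)`. It grows at infinity because `f z ≥ (a/8) z^(1-α)` for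
`z ≥ 1`, and at `0⁺` by the symmetry.
-/

open Filter Topology Set

noncomputable def scalCurv (a c α z : ℝ) : ℝ :=
  (a * z ^ 4 + 2 * c * z ^ 2 + a) / (4 * z * (z ^ 2 + 1)) * (2 * z / (z ^ 2 + 1)) ^ α

noncomputable def scalCurvDerivFactor (a c α z : ℝ) : ℝ :=
  (a * (1 - α) * (z ^ 2 - 1) ^ 2 + 2 * ((3 - α) * a - (1 + α) * c) * z ^ 2) /
    (4 * z ^ 2 * (z ^ 2 + 1) ^ 2) * (2 * z / (z ^ 2 + 1)) ^ α

variable {a c α z : ℝ}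

theorem scalCurv_inv (hz : z ≠ 0) : scalCurv a c α z⁻¹ = scalCurv a c α z := by
  have hw : 2 * z⁻¹ / (z⁻¹ ^ 2 + 1) = 2 * z / (z ^ 2 + 1) := by
    field_simp
    ring
  unfold scalCurv
  rw [hw]
  congr 1
  field_simp
  ring

theorem hasDerivAt_scalCurv (hz : 0 < z) :
    HasDerivAt (scalCurv a c α) ((z ^ 2 - 1) * scalCurvDerivFactor a c α z) z := by
  have hz1 : 0 < z ^ 2 + 1 := by positivity
  have hw : 0 < 2 * z / (z ^ 2 + 1) := by positivity
  have hP : HasDerivAt (fun t => a * t ^ 4 + 2 * c * t ^ 2 + a)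
      (a * (4 * z ^ 3) + 2 * c * (2 * z)) z := by
    simpa using ((hasDerivAt_pow 4 z).const_mul a).add ((hasDerivAt_pow 2 z).const_mul (2 * c))
      |>.add_const a
  have hD : HasDerivAt (fun t => t ^ 2 + 1) (2 * z) z := by
    simpa using (hasDerivAt_pow 2 z).add_const 1
  have hQ : HasDerivAt (fun t => 4 * t * (t ^ 2 + 1)) (4 * (z ^ 2 + 1) + 4 * z * (2 * z)) z := by
    simpa using ((hasDerivAt_id' z).const_mul 4).fun_mul hD
  have hW : HasDerivAt (fun t => 2 * t / (t ^ 2 + 1))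
      ((2 * (z ^ 2 + 1) - 2 * z * (2 * z)) / (z ^ 2 + 1) ^ 2) z := by
    simpa using ((hasDerivAt_id' z).const_mul 2).fun_div hD hz1.ne'
  have h := (hP.fun_div hQ (by positivity)).fun_mul (hW.rpow_const (p := α) (Or.inl hw.ne'))
  refine h.congr_deriv ?_
  unfold scalCurvDerivFactor
  rw [Real.rpow_sub_one hw.ne']
  generalize (2 * z / (z ^ 2 + 1)) ^ α = W
  field_simp
  ring

theorem deriv_scalCurv (hz : 0 < z) :
    deriv (scalCurv a c α) z = (z ^ 2 - 1) * scalCurvDerivFactor a c α z :=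
  (hasDerivAt_scalCurv hz).deriv

theorem scalCurvDerivFactor_pos (ha : 0 < a) (hα : α < 1) (hm : (1 + α) * c < (3 - α) * a)
    (hz : 0 < z) : 0 < scalCurvDerivFactor a c α z := by
  have hα' : 0 < 1 - α := by linarith
  have hm' : 0 < (3 - α) * a - (1 + α) * c := by linarith
  unfold scalCurvDerivFactor
  have : 0 < a * (1 - α) * (z ^ 2 - 1) ^ 2 + 2 * ((3 - α) * a - (1 + α) * c) * z ^ 2 := by
    positivity
  positivity

theorem deriv_scalCurv_one : deriv (scalCurv a c α) 1 = 0 := by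
  simp [deriv_scalCurv one_pos]

theorem deriv_deriv_scalCurv_one :
    deriv (deriv (scalCurv a c α)) 1 = ((3 - α) * a - (1 + α) * c) / 4 := by
  have hev :
      deriv (scalCurv a c α) =ᶠ[𝓝 1] fun t => (t ^ 2 - 1) * scalCurvDerivFactor a c α t :=
    eventually_of_mem (Ioi_mem_nhds one_pos) fun t ht => deriv_scalCurv ht
  have hfac : DifferentiableAt ℝ (scalCurvDerivFactor a c α) 1 := by
    unfold scalCurvDerivFactor
    fun_prop (disch := norm_num)
  have h := ((hasDerivAt_pow 2 (1 : ℝ)).sub_const 1).fun_mul hfac.hasDerivAt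
  rw [hev.deriv_eq, h.deriv]
  norm_num [scalCurvDerivFactor]
  ring

theorem eq_one_of_deriv_scalCurv_eq_zero (ha : 0 < a) (hα : α < 1)
    (hm : (1 + α) * c < (3 - α) * a) (hz : 0 < z) (h : deriv (scalCurv a c α) z = 0) :
    z = 1 := by
  rw [deriv_scalCurv hz, mul_eq_zero] at h
  rcases h with h | h
  · nlinarith
  · exact absurd h (scalCurvDerivFactor_pos ha hα hm hz).ne'

theorem strictMonoOn_scalCurv (ha : 0 < a) (hα : α < 1) (hm : (1 + α) * c < (3 - α) * a) :
    StrictMonoOn (scalCurv a c α) (Ici 1) := by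
  refine strictMonoOn_of_deriv_pos (convex_Ici 1)
    (fun t ht => (hasDerivAt_scalCurv (one_pos.trans_le ht)).continuousAt.continuousWithinAt) ?_
  intro t ht
  rw [interior_Ici] at ht
  have ht0 : 0 < t := one_pos.trans ht
  rw [deriv_scalCurv ht0]
  exact mul_pos (by nlinarith [mem_Ioi.mp ht]) (scalCurvDerivFactor_pos ha hα hm ht0)

theorem scalCurv_one_le (ha : 0 < a) (hα : α < 1) (hm : (1 + α) * c < (3 - α) * a)
    (hz : 0 < z) : scalCurv a c α 1 ≤ scalCurv a c α z := by
  have hmono := (strictMonoOn_scalCurv ha hα hm).monotoneOn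
  rcases le_total 1 z with h | h
  · exact hmono self_mem_Ici h h
  · have h' : 1 ≤ z⁻¹ := one_le_inv₀ hz |>.mpr h
    rw [← scalCurv_inv hz.ne']
    exact hmono self_mem_Ici h' h'

theorem mul_rpow_le_scalCurv (ha : 0 < a) (hc : 0 ≤ c) (hα : 0 ≤ α) (hz : 1 ≤ z) :
    a / 8 * z ^ (1 - α) ≤ scalCurv a c α z := by
  have hz0 : 0 < z := one_pos.trans_le hz
  have hrat : a / 8 * z ≤ (a * z ^ 4 + 2 * c * z ^ 2 + a) / (4 * z * (z ^ 2 + 1)) := by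
    rw [le_div_iff₀ (by positivity)]
    nlinarith [mul_nonneg hc (sq_nonneg z), mul_nonneg ha.le (mul_nonneg (sq_nonneg z)
      (show 0 ≤ z ^ 2 - 1 by nlinarith))]
  have hw : z⁻¹ ≤ 2 * z / (z ^ 2 + 1) := by
    rw [inv_eq_one_div, div_le_div_iff₀ hz0 (by positivity)]
    nlinarith
  calc a / 8 * z ^ (1 - α) = a / 8 * z * z⁻¹ ^ α := by
        rw [Real.inv_rpow hz0.le, Real.rpow_sub hz0, Real.rpow_one]; ring
    _ ≤ scalCurv a c α z :=
        mul_le_mul hrat (Real.rpow_le_rpow (by positivity) hw hα) (by positivity)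
          ((by positivity : (0 : ℝ) ≤ a / 8 * z).trans hrat)

theorem tendsto_scalCurv_atTop (ha : 0 < a) (hc : 0 ≤ c) (hα0 : 0 ≤ α) (hα1 : α < 1) :
    Tendsto (scalCurv a c α) atTop atTop :=
  tendsto_atTop_mono'
    atTop (eventually_ge_atTop 1 |>.mono fun _ hz => mul_rpow_le_scalCurv ha hc hα0 hz)
    ((tendsto_rpow_atTop (by linarith)).const_mul_atTop (by positivity))

theorem tendsto_scalCurv_nhdsGT_zero (ha : 0 < a) (hc : 0 ≤ c) (hα0 : 0 ≤ α) (hα1 : α < 1) :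
    Tendsto (scalCurv a c α) (𝓝[>] 0) atTop :=
  ((tendsto_scalCurv_atTop ha hc hα0 hα1).comp tendsto_inv_nhdsGT_zero).congr'
    (eventually_mem_nhdsWithin.mono fun _ hz => scalCurv_inv (ne_of_gt hz))

theorem stmt_6 (d n κ S : ℝ) (hd : 0 < d) (hn : 0 < n)
    (hκ : 0 < κ) (hκh : κ ≤ 1 / 2) (hS : d - S = κ * n)
    (f : ℝ → ℝ)
    (hf : ∀ z : ℝ, f z = ((d + n) * z ^ 4 + 2 * (2 * d + n - S) * z ^ 2 + (d + n))
        / (4 * z * (z ^ 2 + 1)) * ((2 * z / (z ^ 2 + 1)) ^ (d / (2 * n + d)) : ℝ)) :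
    deriv f 1 = 0 ∧
    deriv (deriv f) 1 = -((d + n) * (d - 2 * n - S)) / (4 * n + 2 * d) ∧
    0 < deriv (deriv f) 1 ∧
    (∀ z : ℝ, 0 < z → deriv f z = 0 → z = 1) ∧
    Tendsto f (𝓝[>] 0) atTop ∧
    Tendsto f atTop atTop ∧
    (∀ z : ℝ, 0 < z → f 1 ≤ f z) := by
  obtain rfl : f = scalCurv (d + n) (2 * d + n - S) (d / (2 * n + d)) := funext hf
  obtain rfl : S = d - κ * n := by linarith
  have ha : 0 < d + n := by positivity
  have hc : 0 ≤ 2 * d + n - (d - κ * n) := by nlinarith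
  have hα0 : 0 ≤ d / (2 * n + d) := by positivity
  have hα1 : d / (2 * n + d) < 1 := (div_lt_one (by positivity)).mpr (by linarith)
  have hdd : deriv (deriv (scalCurv (d + n) (2 * d + n - (d - κ * n)) (d / (2 * n + d)))) 1 =
      -((d + n) * (d - 2 * n - (d - κ * n))) / (4 * n + 2 * d) := by
    rw [deriv_deriv_scalCurv_one]
    field_simp
    ring
  have hdd_pos : 0 < -((d + n) * (d - 2 * n - (d - κ * n))) / (4 * n + 2 * d) := by
    have : 0 < 2 * n - κ * n := by nlinarith
    apply div_pos <;> nlinarith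
  have hm : (1 + d / (2 * n + d)) * (2 * d + n - (d - κ * n)) <
      (3 - d / (2 * n + d)) * (d + n) := by
    rw [deriv_deriv_scalCurv_one] at hdd
    linarith
  exact ⟨deriv_scalCurv_one, hdd, hdd.symm ▸ hdd_pos,
    fun z hz => eq_one_of_deriv_scalCurv_eq_zero ha hα1 hm hz,
    tendsto_scalCurv_nhdsGT_zero ha hc hα0 hα1, tendsto_scalCurv_atTop ha hc hα0 hα1,
    fun z hz => scalCurv_one_le ha hα1 hm hz⟩
end

section
/- Let n, d > 0, 0 < a < 1, κ = d(1-a)/n with κ ≤ 1/2 and a + κ < 1, and suppose (2κ+1)^2 > 8a(1-a+κ). Let x_± be the roots of 2ax^2 - (2κ+1)x + (1-a+κ) = 0 with x_- < x_+. Then for both signs, the inequality λ_1^± := κ/(2x_±^2) < 2ρ^± := ((2κ+1)x_± - κ)/(2x_±^2) holds, i.e., 2κ/(2κ+1) < x_-. -/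
/-!
Both inequalities `λ₁^± < 2ρ^±` say `2κ < (2κ+1) x_±`, so it suffices to treat the smaller root.
Clearing denominators, `2κ/(2κ+1) < x_-` becomes `(2κ+1)√Δ < (2κ+1)² - 8aκ`, and after squaring
the gap is `8a((1-a-κ)(2κ+1)² + 8aκ²) > 0`.
-/

lemma div_two_sq_lt_sub_div_two_sq_iff {κ x : ℝ} (hx : x ≠ 0) :
    κ / (2 * x ^ 2) < ((2 * κ + 1) * x - κ) / (2 * x ^ 2) ↔ 2 * κ < (2 * κ + 1) * x := by
  rw [div_lt_div_iff_of_pos_right (by positivity)]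
  constructor <;> intro h <;> linarith

lemma two_mul_div_lt_smaller_root {a κ : ℝ} (ha : 0 < a) (hκ : 0 < κ) (hak : a + κ < 1)
    (hΔ : 0 ≤ (2 * κ + 1) ^ 2 - 8 * a * (1 - a + κ)) :
    2 * κ / (2 * κ + 1) <
      (2 * κ + 1 - Real.sqrt ((2 * κ + 1) ^ 2 - 8 * a * (1 - a + κ))) / (4 * a) := by
  set s := Real.sqrt ((2 * κ + 1) ^ 2 - 8 * a * (1 - a + κ))
  have hs : s ^ 2 = (2 * κ + 1) ^ 2 - 8 * a * (1 - a + κ) := Real.sq_sqrt hΔ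
  have hrhs : 0 < (2 * κ + 1) ^ 2 - 8 * a * κ := by nlinarith [sq_nonneg (3 * κ - 1)]
  have hsq : ((2 * κ + 1) * s) ^ 2 < ((2 * κ + 1) ^ 2 - 8 * a * κ) ^ 2 := by
    have hgap : ((2 * κ + 1) ^ 2 - 8 * a * κ) ^ 2 - ((2 * κ + 1) * s) ^ 2
        = 8 * a * ((1 - a - κ) * (2 * κ + 1) ^ 2 + 8 * a * κ ^ 2) := by
      rw [mul_pow, hs]; ring
    have : 0 < 1 - a - κ := by linarith
    nlinarith [show 0 < 8 * a * ((1 - a - κ) * (2 * κ + 1) ^ 2 + 8 * a * κ ^ 2) by positivity]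
  have hlt := lt_of_pow_lt_pow_left₀ 2 hrhs.le hsq
  rw [div_lt_div_iff₀ (by linarith) (by linarith)]
  linarith

theorem stmt_12_general (n d a κ : ℝ) (hn : 0 < n) (hd : 0 < d) (ha : 0 < a) (ha1 : a < 1)
    (hκ : κ = d * (1 - a) / n) (hak : a + κ < 1)
    (hcond : (2 * κ + 1) ^ 2 > 8 * a * (1 - a + κ))
    (xp xm : ℝ)
    (hxp : xp = (2 * κ + 1 + Real.sqrt ((2 * κ + 1) ^ 2 - 8 * a * (1 - a + κ))) / (4 * a))
    (hxm : xm = (2 * κ + 1 - Real.sqrt ((2 * κ + 1) ^ 2 - 8 * a * (1 - a + κ))) / (4 * a)) :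
    κ / (2 * xp ^ 2) < ((2 * κ + 1) * xp - κ) / (2 * xp ^ 2) ∧
    κ / (2 * xm ^ 2) < ((2 * κ + 1) * xm - κ) / (2 * xm ^ 2) ∧
    2 * κ / (2 * κ + 1) < xm := by
  have hκpos : 0 < κ := hκ ▸ div_pos (mul_pos hd (sub_pos.2 ha1)) hn
  have hm : 2 * κ / (2 * κ + 1) < xm :=
    hxm ▸ two_mul_div_lt_smaller_root ha hκpos hak (sub_nonneg.2 hcond.le)
  have hxm_pos : 0 < xm := lt_trans (by positivity) hm
  have hxm_le_xp : xm ≤ xp := by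
    rw [hxp, hxm]
    gcongr
    linarith [Real.sqrt_nonneg ((2 * κ + 1) ^ 2 - 8 * a * (1 - a + κ))]
  have hBm : 2 * κ < (2 * κ + 1) * xm := by rwa [div_lt_iff₀' (by linarith)] at hm
  have hBp : 2 * κ < (2 * κ + 1) * xp :=
    hBm.trans_le (mul_le_mul_of_nonneg_left hxm_le_xp (by linarith))
  exact ⟨(div_two_sq_lt_sub_div_two_sq_iff (by linarith)).2 hBp,
    (div_two_sq_lt_sub_div_two_sq_iff hxm_pos.ne').2 hBm, hm⟩

theorem stmt_12 (n d a κ : ℝ) (hn : 0 < n) (hd : 0 < d) (ha : 0 < a) (ha1 : a < 1)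
    (hκ : κ = d * (1 - a) / n) (hκh : κ ≤ 1 / 2) (hak : a + κ < 1)
    (hcond : (2 * κ + 1) ^ 2 > 8 * a * (1 - a + κ))
    (xp xm : ℝ)
    (hxp : xp = (2 * κ + 1 + Real.sqrt ((2 * κ + 1) ^ 2 - 8 * a * (1 - a + κ))) / (4 * a))
    (hxm : xm = (2 * κ + 1 - Real.sqrt ((2 * κ + 1) ^ 2 - 8 * a * (1 - a + κ))) / (4 * a)) :
    κ / (2 * xp ^ 2) < ((2 * κ + 1) * xp - κ) / (2 * xp ^ 2) ∧
    κ / (2 * xm ^ 2) < ((2 * κ + 1) * xm - κ) / (2 * xm ^ 2) ∧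
    2 * κ / (2 * κ + 1) < xm :=
  stmt_12_general n d a κ hn hd ha ha1 hκ hak hcond xp xm hxp hxm
end
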